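/- Let n, p, e be natural numbers, Q an n×n real diagonal matrix with strictly positive diagonal entries, P an n×n real symmetric positive definite matrix, A_b an n×n real matrix, B an n×p real matrix with Q·P·B = B, σ > 0, and E a p×e real matrix. Let R₁, R₂ : Fin e → ℝ satisfy 0 < R₂ l ≤ R₁ l for every l, and set 𝓛ᵢ := E·diag(Rᵢ)⁻¹·Eᵀ for i = 1, 2. If Q·P·(A_b − B·𝓛₁·Bᵀ) + (A_b − B·𝓛₁·Bᵀ)ᵀ·P·Q + σ·B·Bᵀ is negative semidefinite, then Q·P·(A_b − B·𝓛₂·Bᵀ) + (A_b − B·𝓛₂·Bᵀ)ᵀ·P·Q + σ·B·Bᵀ is also negative semidefinite. (Lowering the line resistances of a cluster preserves its verified output strict equilibrium-independent passivity.) -/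

import Mathlib

/-!
Because `Q P B = B` with `P`, `Q` symmetric, the coupling terms of the LMI collapse: its matrix is
`Q P A_b + A_bᵀ P Q + σ B Bᵀ - B (𝓛 + 𝓛ᵀ) Bᵀ`. Lowering the resistances raises every line
conductance `1 / R l`, so `𝓛 = E diag(1 / R) Eᵀ` grows in the Loewner order, and the LMI matrix
can only decrease.
-/

open Matrix

open scoped MatrixOrder

namespace Matrix

variable {n ι : Type*} [Fintype n] [Fintype ι] [DecidableEq ι]

theorem inv_diagonal_of_ne_zero {K : Type*} [Field K] {v : ι → K} (hv : ∀ i, v i ≠ 0) :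
    (diagonal v)⁻¹ = diagonal v⁻¹ :=
  inv_eq_right_inv <| by
    rw [diagonal_mul_diagonal, ← diagonal_one]
    exact congrArg diagonal (funext fun i => mul_inv_cancel₀ (hv i))

theorem dotProduct_mulVec_le_of_le {M N : Matrix n n ℝ} (h : M ≤ N) (x : n → ℝ) :
    x ⬝ᵥ M *ᵥ x ≤ x ⬝ᵥ N *ᵥ x := by
  have hdiff := h.dotProduct_mulVec_nonneg x
  rw [star_trivial, sub_mulVec, dotProduct_sub] at hdiff
  linarith

end Matrix

section

variable {m n ι : Type*} [Fintype m] [Fintype n] [Fintype ι] [DecidableEq ι]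

noncomputable def conductanceLaplacian (E : Matrix m ι ℝ) (R : ι → ℝ) : Matrix m m ℝ :=
  E * (diagonal R)⁻¹ * Eᵀ

theorem conductanceLaplacian_le_conductanceLaplacian (E : Matrix m ι ℝ) {R₁ R₂ : ι → ℝ}
    (hR₂ : ∀ l, 0 < R₂ l) (hR : R₂ ≤ R₁) :
    conductanceLaplacian E R₁ ≤ conductanceLaplacian E R₂ := by
  have hR₁ (l : ι) : 0 < R₁ l := (hR₂ l).trans_le (hR l)
  have hconductance : 0 ≤ R₂⁻¹ - R₁⁻¹ := fun l =>
    sub_nonneg.mpr (inv_anti₀ (hR₂ l) (hR l))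
  rw [le_iff, conductanceLaplacian, conductanceLaplacian,
    inv_diagonal_of_ne_zero fun l => (hR₁ l).ne', inv_diagonal_of_ne_zero fun l => (hR₂ l).ne',
    ← Matrix.sub_mul, ← Matrix.mul_sub, diagonal_sub]
  have h := (PosSemidef.diagonal hconductance).mul_mul_conjTranspose_same E
  rw [conjTranspose_eq_transpose_of_trivial] at h
  exact h

def passivityLMI (Q P A : Matrix n n ℝ) (B : Matrix n m ℝ) (σ : ℝ) (L : Matrix m m ℝ) :
    Matrix n n ℝ :=
  Q * P * (A - B * L * Bᵀ) + (A - B * L * Bᵀ)ᵀ * P * Q + σ • (B * Bᵀ)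

variable {Q P A : Matrix n n ℝ} {B : Matrix n m ℝ}

theorem passivityLMI_eq (hQ : Qᵀ = Q) (hP : Pᵀ = P) (hQPB : Q * P * B = B) (σ : ℝ)
    (L : Matrix m m ℝ) :
    passivityLMI Q P A B σ L = Q * P * A + Aᵀ * P * Q - B * (L + Lᵀ) * Bᵀ + σ • (B * Bᵀ) := by
  have hBPQ : Bᵀ * P * Q = Bᵀ := by
    simpa [transpose_mul, hQ, hP, Matrix.mul_assoc] using congrArg transpose hQPB
  have hleft : Q * P * (B * L * Bᵀ) = B * L * Bᵀ := by
    rw [← Matrix.mul_assoc, ← Matrix.mul_assoc, hQPB]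
  have hright : (B * L * Bᵀ)ᵀ * P * Q = B * Lᵀ * Bᵀ :=
    calc (B * L * Bᵀ)ᵀ * P * Q = B * Lᵀ * (Bᵀ * P * Q) := by
          simp only [transpose_mul, transpose_transpose, Matrix.mul_assoc]
      _ = B * Lᵀ * Bᵀ := by rw [hBPQ]
  rw [passivityLMI, Matrix.mul_sub, transpose_sub, Matrix.sub_mul, Matrix.sub_mul, hleft, hright,
    Matrix.mul_add, Matrix.add_mul]
  abel

theorem passivityLMI_le_passivityLMI (hQ : Qᵀ = Q) (hP : Pᵀ = P) (hQPB : Q * P * B = B) (σ : ℝ)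
    {L₁ L₂ : Matrix m m ℝ} (hL : L₁ ≤ L₂) :
    passivityLMI Q P A B σ L₂ ≤ passivityLMI Q P A B σ L₁ := by
  have hsum : (L₂ + L₂ᵀ - (L₁ + L₁ᵀ)).PosSemidef := by
    simpa [add_sub_add_comm, transpose_sub] using hL.add hL.transpose
  have hdiff : passivityLMI Q P A B σ L₁ - passivityLMI Q P A B σ L₂
      = B * (L₂ + L₂ᵀ - (L₁ + L₁ᵀ)) * Bᴴ := by
    rw [passivityLMI_eq hQ hP hQPB, passivityLMI_eq hQ hP hQPB,
      conjTranspose_eq_transpose_of_trivial, Matrix.mul_sub, Matrix.sub_mul]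
    abel
  rw [le_iff, hdiff]
  exact hsum.mul_mul_conjTranspose_same B

end

theorem lowering_line_resistances_preserves_OSEIP_general
    (n p e : ℕ) (d : Fin n → ℝ)
    (Q : Matrix (Fin n) (Fin n) ℝ) (hQ : Q = Matrix.diagonal d)
    (P : Matrix (Fin n) (Fin n) ℝ) (hP : P.PosDef)
    (Ab : Matrix (Fin n) (Fin n) ℝ) (B : Matrix (Fin n) (Fin p) ℝ)
    (hQPB : Q * P * B = B) (σ : ℝ)
    (E : Matrix (Fin p) (Fin e) ℝ)
    (R₁ R₂ : Fin e → ℝ) (hR : ∀ l, 0 < R₂ l ∧ R₂ l ≤ R₁ l)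
    (L₁ L₂ : Matrix (Fin p) (Fin p) ℝ)
    (hL₁ : L₁ = E * (Matrix.diagonal R₁)⁻¹ * Eᵀ)
    (hL₂ : L₂ = E * (Matrix.diagonal R₂)⁻¹ * Eᵀ)
    (hLMI₁ : ∀ x : Fin n → ℝ,
      x ⬝ᵥ (Q * P * (Ab - B * L₁ * Bᵀ) + (Ab - B * L₁ * Bᵀ)ᵀ * P * Q
              + σ • (B * Bᵀ)).mulVec x ≤ 0) :
    ∀ x : Fin n → ℝ,
      x ⬝ᵥ (Q * P * (Ab - B * L₂ * Bᵀ) + (Ab - B * L₂ * Bᵀ)ᵀ * P * Q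
              + σ • (B * Bᵀ)).mulVec x ≤ 0 := by
  subst hQ hL₁ hL₂
  have hL : conductanceLaplacian E R₁ ≤ conductanceLaplacian E R₂ :=
    conductanceLaplacian_le_conductanceLaplacian E (fun l => (hR l).1) fun l => (hR l).2
  have hLMI :=
    passivityLMI_le_passivityLMI (A := Ab) (diagonal_transpose d) hP.isHermitian.eq hQPB σ hL
  exact fun x => (dotProduct_mulVec_le_of_le hLMI x).trans (hLMI₁ x)

/-- Corollary 1: lowering the line resistances of a cluster preserves its
verified reduced-order OS-EIP LMI. -/
theorem lowering_line_resistances_preserves_OSEIP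
    (n p e : ℕ) (d : Fin n → ℝ) (hd : ∀ i, 0 < d i)
    (Q : Matrix (Fin n) (Fin n) ℝ) (hQ : Q = Matrix.diagonal d)
    (P : Matrix (Fin n) (Fin n) ℝ) (hP : P.PosDef)
    (Ab : Matrix (Fin n) (Fin n) ℝ) (B : Matrix (Fin n) (Fin p) ℝ)
    (hQPB : Q * P * B = B) (σ : ℝ) (hσ : 0 < σ)
    (E : Matrix (Fin p) (Fin e) ℝ)
    (R₁ R₂ : Fin e → ℝ) (hR : ∀ l, 0 < R₂ l ∧ R₂ l ≤ R₁ l)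
    (L₁ L₂ : Matrix (Fin p) (Fin p) ℝ)
    (hL₁ : L₁ = E * (Matrix.diagonal R₁)⁻¹ * Eᵀ)
    (hL₂ : L₂ = E * (Matrix.diagonal R₂)⁻¹ * Eᵀ)
    (hLMI₁ : ∀ x : Fin n → ℝ,
      x ⬝ᵥ (Q * P * (Ab - B * L₁ * Bᵀ) + (Ab - B * L₁ * Bᵀ)ᵀ * P * Q
              + σ • (B * Bᵀ)).mulVec x ≤ 0) :
    ∀ x : Fin n → ℝ,
      x ⬝ᵥ (Q * P * (Ab - B * L₂ * Bᵀ) + (Ab - B * L₂ * Bᵀ)ᵀ * P * Q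
              + σ • (B * Bᵀ)).mulVec x ≤ 0 :=
  lowering_line_resistances_preserves_OSEIP_general n p e d Q hQ P hP Ab B hQPB σ E R₁ R₂ hR L₁ L₂
    hL₁ hL₂ hLMI₁
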